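/- Let g be a metric (positive-definite inner product) on a real vector space V and let I, J, K be orthogonal complex structures on V satisfying the quaternion relations I² = J² = K² = IJK = -1, with Kähler forms ω₁(X,Y) = g(I X, Y), ω₂(X,Y) = g(J X, Y), ω₃(X,Y) = g(K X, Y). A subspace N ⊆ V is complex (I(N) = N) and Lagrangian for both ω₂ and ω₃ if and only if N is totally real of half dimension with respect to both J and K, with Ω₂ = ω₃ + i ω₁ restricting to purely imaginary values on N, and Ω₃ = ω₁ + i ω₂ restricting to purely real values on N. -/
import Mathlib


open RealInnerProductSpace

/-- Linear core of the brane correspondence: on a hyperkähler vector space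
`(V, g, I, J, K)` with Kähler forms `ω₁ = g(I·,·)`, `ω₂ = g(J·,·)`,
`ω₃ = g(K·,·)`, a subspace `N` is complex for `I` and Lagrangian for `ω₂`
and `ω₃` iff it is totally real of half dimension for both `J` and `K`,
with `Ω₂ = ω₃ + i ω₁` purely imaginary on `N` (i.e. `ω₃|_N = 0`) and
`Ω₃ = ω₁ + i ω₂` purely real on `N` (i.e. `ω₂|_N = 0`). -/
theorem stmt6 {V : Type*} [NormedAddCommGroup V] [InnerProductSpace ℝ V]
    [FiniteDimensional ℝ V]
    (I J K : V →ₗ[ℝ] V)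
    (hIg : ∀ X Y : V, ⟪I X, I Y⟫ = ⟪X, Y⟫)
    (hJg : ∀ X Y : V, ⟪J X, J Y⟫ = ⟪X, Y⟫)
    (hKg : ∀ X Y : V, ⟪K X, K Y⟫ = ⟪X, Y⟫)
    (hI2 : ∀ X : V, I (I X) = -X)
    (hJ2 : ∀ X : V, J (J X) = -X)
    (hK2 : ∀ X : V, K (K X) = -X)
    (hIJK : ∀ X : V, I (J (K X)) = -X)
    (N : Submodule ℝ V) :
    (N.map I = N ∧
      (∀ X ∈ N, ∀ Y ∈ N, ⟪J X, Y⟫ = 0) ∧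
      (∀ X ∈ N, ∀ Y ∈ N, ⟪K X, Y⟫ = 0) ∧
      2 * Module.finrank ℝ N = Module.finrank ℝ V) ↔
    (N ⊓ N.map J = ⊥ ∧ N ⊓ N.map K = ⊥ ∧
      2 * Module.finrank ℝ N = Module.finrank ℝ V ∧
      (∀ X ∈ N, ∀ Y ∈ N, ⟪K X, Y⟫ = 0) ∧
      (∀ X ∈ N, ∀ Y ∈ N, ⟪J X, Y⟫ = 0)) := by
  constructor
  · rintro ⟨-, hJN, hKN, hdim⟩
    refine ⟨?_, ?_, hdim, hKN, hJN⟩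
    · rw [Submodule.eq_bot_iff]
      rintro v ⟨hv, Y, hY, rfl⟩
      have := hJN Y hY (J Y) hv
      have : J Y = 0 := by
        rwa [inner_self_eq_zero] at this
      simp [this]
    · rw [Submodule.eq_bot_iff]
      rintro v ⟨hv, Y, hY, rfl⟩
      have := hKN Y hY (K Y) hv
      have : K Y = 0 := by
        rwa [inner_self_eq_zero] at this
      simp [this]
  · rintro ⟨-, -, hdim, hKN, hJN⟩
    refine ⟨?_, hJN, hKN, hdim⟩
    have hJinj : Function.Injective J := by
      intro a b hab
      have := congrArg J hab
      rw [hJ2, hJ2, neg_inj] at this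
      exact this
    have hKinj : Function.Injective K := by
      intro a b hab
      have := congrArg K hab
      rw [hK2, hK2, neg_inj] at this
      exact this
    have hJdim : Module.finrank ℝ (N.map J) = Module.finrank ℝ N :=
      LinearEquiv.finrank_map_eq
        (LinearEquiv.ofLinear J (-J) (by ext x; simp [hJ2 x]) (by ext x; simp [hJ2 x])) N
    have hKdim : Module.finrank ℝ (N.map K) = Module.finrank ℝ N :=
      LinearEquiv.finrank_map_eq
        (LinearEquiv.ofLinear K (-K) (by ext x; simp [hK2 x]) (by ext x; simp [hK2 x])) N
    have horth : Module.finrank ℝ N + Module.finrank ℝ Nᗮ = Module.finrank ℝ V :=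
      Submodule.finrank_add_finrank_orthogonal N
    have hJle : N.map J ≤ Nᗮ := by
      rintro _ ⟨X, hX, rfl⟩
      intro y hy
      rw [real_inner_comm]
      exact hJN X hX y hy
    have hKle : N.map K ≤ Nᗮ := by
      rintro _ ⟨X, hX, rfl⟩
      intro y hy
      rw [real_inner_comm]
      exact hKN X hX y hy
    have hJeq : N.map J = Nᗮ :=
      Submodule.eq_of_le_of_finrank_eq hJle (by omega)
    have hKeq : N.map K = Nᗮ :=
      Submodule.eq_of_le_of_finrank_eq hKle (by omega)
    have hIJ : ∀ X : V, I (J X) = K X := by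
      intro X
      have := hIJK (-(K X))
      rw [map_neg, hK2] at this
      simpa using this
    have hIN : ∀ X ∈ N, I X ∈ N := by
      intro X hX
      have hJX : J X ∈ N.map K := by rw [hKeq, ← hJeq]; exact ⟨X, hX, rfl⟩
      obtain ⟨W, hW, hKW⟩ := hJX
      have h1 : I X = -K (J X) := by
        have h := hIJ (J X)
        rw [hJ2, map_neg] at h
        rw [← h, neg_neg]
      rw [h1, ← hKW, hK2, neg_neg]
      exact hW
    apply le_antisymm
    · rintro _ ⟨X, hX, rfl⟩
      exact hIN X hX
    · intro X hX
      refine ⟨-(I X), N.neg_mem (hIN X hX), ?_⟩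
      rw [map_neg, hI2, neg_neg]
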